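/- For the parabolic maximal operator P_δ and the test function g = 1_T where T = [0, δ^{1/2}] × [0, C δ] with suitable constant C, one has P_δ g(a) ≳ δ^{1/2} for all a ∈ [1,2], and consequently the operator norm from L^p(ℝ²) to L^q([1,2]) satisfies B(p,q,δ) ≳ δ^{1/2} / δ^{3/(2p)} = δ^{1/2 − 3/(2p)}. -/

import Mathlib

/-!
Take `T = [0, δ^{1/2}] × [0, 4δ]` and average over the neighbourhood of the parabola based at
`(0, δ)`: for `t ≤ δ^{1/2}` and `a ≤ 2` we have `a t² ≤ 2δ`, so the whole vertical segment
`δ + a t² + [-δ, δ]` lies in `[0, 4δ]`. Hence `P_δ 1_T(a) ≥ (2δ)⁻¹ · δ^{1/2} · 2δ = δ^{1/2}` on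
`[1, 2]`, while `‖1_T‖_p = (4 δ^{3/2})^{1/p} ≤ 4 δ^{3/(2p)}`.
-/

open Set MeasureTheory

/-- The `δ`-thickened parabolic maximal operator. -/
noncomputable def Pop (δ : ℝ) (g : ℝ × ℝ → ℝ) (a : ℝ) : ℝ :=
  ⨆ x : ℝ × ℝ, (2 * δ)⁻¹ *
    ∫ t in (0:ℝ)..1, ∫ s in (-δ)..δ, |g (x.1 + t, x.2 + a * t ^ 2 + s)|

noncomputable def parabolicAverage (δ : ℝ) (g : ℝ × ℝ → ℝ) (a : ℝ) (x : ℝ × ℝ) : ℝ :=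
  (2 * δ)⁻¹ * ∫ t in (0:ℝ)..1, ∫ s in (-δ)..δ, |g (x.1 + t, x.2 + a * t ^ 2 + s)|

section MaximalOperator

variable {δ M : ℝ} {g : ℝ × ℝ → ℝ}

theorem parabolicAverage_le_of_abs_le (hδ : 0 < δ) (hg : ∀ y, |g y| ≤ M) (a : ℝ)
    (x : ℝ × ℝ) : parabolicAverage δ g a x ≤ M := by
  have inner : ∀ t : ℝ,
      ‖∫ s in (-δ)..δ, |g (x.1 + t, x.2 + a * t ^ 2 + s)|‖ ≤ M * |δ - -δ| := fun t =>
    intervalIntegral.norm_integral_le_of_norm_le_const fun s _ => by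
      rw [Real.norm_eq_abs, abs_abs]; exact hg _
  have outer := intervalIntegral.norm_integral_le_of_norm_le_const (a := 0) (b := 1)
    fun t _ => inner t
  rw [Real.norm_eq_abs, abs_of_pos (by linarith : (0:ℝ) < δ - -δ), sub_zero, abs_one,
    mul_one] at outer
  calc parabolicAverage δ g a x
      ≤ (2 * δ)⁻¹ * (M * (δ - -δ)) :=
        mul_le_mul_of_nonneg_left ((le_abs_self _).trans outer) (by positivity)
    _ = M := by field_simp; ring

theorem parabolicAverage_le_Pop (hδ : 0 < δ) (hg : ∀ y, |g y| ≤ M) (a : ℝ) (x : ℝ × ℝ) :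
    parabolicAverage δ g a x ≤ Pop δ g a :=
  le_ciSup ⟨M, by rintro _ ⟨x, rfl⟩; exact parabolicAverage_le_of_abs_le hδ hg a x⟩ x

end MaximalOperator

def parabolaBox (δ C : ℝ) : Set (ℝ × ℝ) :=
  Icc 0 (δ ^ ((1:ℝ) / 2)) ×ˢ Icc 0 (C * δ)

section Box

variable {δ a : ℝ}

theorem volume_parabolaBox (hδ : 0 ≤ δ) (C : ℝ) :
    volume (parabolaBox δ C) = ENNReal.ofReal (C * δ ^ ((3:ℝ) / 2)) := by
  rw [parabolaBox, Measure.volume_eq_prod, Measure.prod_prod, Real.volume_Icc, Real.volume_Icc,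
    sub_zero, sub_zero, ← ENNReal.ofReal_mul (by positivity),
    show (3:ℝ) / 2 = 1 / 2 + 1 by norm_num, Real.rpow_add' hδ (by norm_num), Real.rpow_one]
  ring_nf

theorem integral_abs_indicator_parabolaBox_slice (hδ : 0 < δ) (ha : a ∈ Icc 0 2) {t : ℝ}
    (ht : 0 ≤ t) :
    ∫ s in (-δ)..δ, |(parabolaBox δ 4).indicator (fun _ => (1:ℝ)) (t, δ + a * t ^ 2 + s)| =
      {u | u ≤ δ ^ ((1:ℝ) / 2)}.indicator (fun _ => 2 * δ) t := by
  by_cases htr : t ≤ δ ^ ((1:ℝ) / 2)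
  · have ht2 : t ^ 2 ≤ δ := by
      rw [← Real.sqrt_eq_rpow] at htr
      simpa [Real.sq_sqrt hδ.le] using pow_le_pow_left₀ ht htr 2
    rw [indicator_of_mem (show t ∈ {u | u ≤ δ ^ ((1:ℝ) / 2)} from htr)]
    calc _ = ∫ _ in (-δ)..δ, (1:ℝ) := by
          refine intervalIntegral.integral_congr fun s hs => ?_
          rw [uIcc_of_le (by linarith)] at hs
          rw [indicator_of_mem, abs_one]
          exact ⟨⟨ht, htr⟩, by nlinarith [hs.1, ha.1], by nlinarith [hs.2, ha.2]⟩
      _ = 2 * δ := by rw [intervalIntegral.integral_const, smul_eq_mul, mul_one]; ring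
  · rw [indicator_of_notMem (show t ∉ {u | u ≤ δ ^ ((1:ℝ) / 2)} from htr)]
    refine intervalIntegral.integral_zero_ae (ae_of_all _ fun s _ => ?_)
    rw [indicator_of_notMem (fun h => htr h.1.2), abs_zero]

theorem integral_integral_abs_indicator_parabolaBox (hδ : 0 < δ) (hδ1 : δ ≤ 1)
    (ha : a ∈ Icc 0 2) :
    ∫ t in (0:ℝ)..1, ∫ s in (-δ)..δ,
        |(parabolaBox δ 4).indicator (fun _ => (1:ℝ)) (t, δ + a * t ^ 2 + s)| =
      δ ^ ((1:ℝ) / 2) * (2 * δ) := by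
  have hr : δ ^ ((1:ℝ) / 2) ∈ Icc 0 1 :=
    ⟨by positivity, Real.rpow_le_one hδ.le hδ1 (by norm_num)⟩
  calc _ = ∫ t in (0:ℝ)..1, {u | u ≤ δ ^ ((1:ℝ) / 2)}.indicator (fun _ => 2 * δ) t := by
        refine intervalIntegral.integral_congr fun t ht => ?_
        rw [uIcc_of_le zero_le_one] at ht
        exact integral_abs_indicator_parabolaBox_slice hδ ha ht.1
    _ = δ ^ ((1:ℝ) / 2) * (2 * δ) := by
        rw [intervalIntegral.integral_indicator hr, intervalIntegral.integral_const, smul_eq_mul,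
          sub_zero]

theorem rpow_half_le_Pop_indicator_parabolaBox (hδ : 0 < δ) (hδ1 : δ ≤ 1) (ha : a ∈ Icc 0 2) :
    δ ^ ((1:ℝ) / 2) ≤ Pop δ ((parabolaBox δ 4).indicator fun _ => (1:ℝ)) a := by
  have hbound : ∀ y, |(parabolaBox δ 4).indicator (fun _ => (1:ℝ)) y| ≤ 1 := fun y => by
    by_cases hy : y ∈ parabolaBox δ 4 <;> simp [hy]
  calc δ ^ ((1:ℝ) / 2)
      = parabolicAverage δ ((parabolaBox δ 4).indicator fun _ => 1) a (0, δ) := by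
        simp only [parabolicAverage, zero_add]
        rw [integral_integral_abs_indicator_parabolaBox hδ hδ1 ha]
        field_simp
    _ ≤ _ := parabolicAverage_le_Pop hδ hbound a _

theorem eLpNorm_indicator_parabolaBox (hδ : 0 ≤ δ) {C : ℝ} (hC : 0 ≤ C) {p : ℝ} (hp : 0 < p) :
    eLpNorm ((parabolaBox δ C).indicator fun _ => (1:ℝ)) (ENNReal.ofReal p) volume =
      ENNReal.ofReal ((C * δ ^ ((3:ℝ) / 2)) ^ (1 / p)) := by
  rw [eLpNorm_indicator_const (s := parabolaBox δ C) (measurableSet_Icc.prod measurableSet_Icc)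
      (by simpa using hp) ENNReal.ofReal_ne_top, volume_parabolaBox hδ, enorm_one, one_mul,
    ENNReal.toReal_ofReal hp.le, ENNReal.ofReal_rpow_of_nonneg (by positivity) (by positivity)]

end Box

theorem ofReal_le_eLpNorm_of_ae_le {α : Type*} [MeasurableSpace α] {μ : Measure α}
    [IsProbabilityMeasure μ] {p : ENNReal} (hp : p ≠ 0) {f : α → ℝ} {c : ℝ}
    (hf : ∀ᵐ x ∂μ, c ≤ f x) : ENNReal.ofReal c ≤ eLpNorm f p μ := by
  rcases le_or_gt c 0 with hc | hc
  · simp [ENNReal.ofReal_eq_zero.2 hc]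
  calc ENNReal.ofReal c = eLpNorm (fun _ => c) p μ := by
        rw [eLpNorm_const _ hp (IsProbabilityMeasure.ne_zero μ), measure_univ, ENNReal.one_rpow,
          mul_one, Real.enorm_of_nonneg hc.le]
    _ ≤ eLpNorm f p μ := eLpNorm_mono_ae <| hf.mono fun x hx => by
        rw [Real.norm_of_nonneg hc.le, Real.norm_eq_abs]; exact hx.trans (le_abs_self _)

theorem rpow_sub_mul_rpow_le {δ C p : ℝ} (hδ : 0 < δ) (hC : 1 ≤ C) (hp : 1 ≤ p) :
    δ ^ ((1:ℝ) / 2 - 3 / (2 * p)) * (C * δ ^ ((3:ℝ) / 2)) ^ (1 / p) ≤ C * δ ^ ((1:ℝ) / 2) := by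
  have hexp : δ ^ ((1:ℝ) / 2 - 3 / (2 * p)) * δ ^ ((3:ℝ) / 2 * (1 / p)) = δ ^ ((1:ℝ) / 2) := by
    rw [← Real.rpow_add hδ]; ring_nf
  have hCp : C ^ (1 / p) ≤ C :=
    Real.rpow_le_self_of_one_le hC ((div_le_one (by linarith)).2 hp)
  calc _ = C ^ (1 / p) * δ ^ ((1:ℝ) / 2) := by
        rw [Real.mul_rpow (by linarith) (by positivity), ← Real.rpow_mul hδ.le, ← hexp]; ring
    _ ≤ C * δ ^ ((1:ℝ) / 2) := by gcongr

/-- For `g = 1_T` with `T = [0, δ^{1/2}] × [0, Cδ]` (suitable `C`), one has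
`P_δ g(a) ≳ δ^{1/2}` for all `a ∈ [1,2]`, and consequently
`B(p,q,δ) ≳ δ^{1/2 − 3/(2p)}`. -/
theorem stmt18 :
    ∃ C ≥ (1:ℝ), ∃ K > (0:ℝ), ∀ δ : ℝ, 0 < δ → δ < 1 →
      (∀ a ∈ Icc (1:ℝ) 2,
        K * δ ^ ((1:ℝ) / 2) ≤
          Pop δ ((Icc (0:ℝ) (δ ^ ((1:ℝ) / 2)) ×ˢ Icc (0:ℝ) (C * δ)).indicator
            fun _ => (1:ℝ)) a) ∧
      (∀ p q : ℝ, 1 ≤ p → 1 ≤ q →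
        ENNReal.ofReal (K * δ ^ ((1:ℝ) / 2 - 3 / (2 * p))) ≤
          eLpNorm (Pop δ ((Icc (0:ℝ) (δ ^ ((1:ℝ) / 2)) ×ˢ Icc (0:ℝ) (C * δ)).indicator
              fun _ => (1:ℝ)))
              (ENNReal.ofReal q) (volume.restrict (Icc (1:ℝ) 2)) /
            eLpNorm ((Icc (0:ℝ) (δ ^ ((1:ℝ) / 2)) ×ˢ Icc (0:ℝ) (C * δ)).indicator
              fun _ => (1:ℝ)) (ENNReal.ofReal p) volume) := by
  refine ⟨4, by norm_num, 1 / 4, by norm_num, fun δ hδ hδ1 => ?_⟩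
  rw [show Icc (0:ℝ) (δ ^ ((1:ℝ) / 2)) ×ˢ Icc (0:ℝ) (4 * δ) = parabolaBox δ 4 from rfl]
  have hPop : ∀ a ∈ Icc (1:ℝ) 2,
      δ ^ ((1:ℝ) / 2) ≤ Pop δ ((parabolaBox δ 4).indicator fun _ => (1:ℝ)) a := fun a ha =>
    rpow_half_le_Pop_indicator_parabolaBox hδ hδ1.le ⟨by linarith [ha.1], ha.2⟩
  refine ⟨fun a ha => le_trans ?_ (hPop a ha), fun p q hp hq => ?_⟩
  · have : 0 < δ ^ ((1:ℝ) / 2) := by positivity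
    linarith
  have : IsProbabilityMeasure (volume.restrict (Icc (1:ℝ) 2)) := ⟨by norm_num⟩
  have hnum := ofReal_le_eLpNorm_of_ae_le (μ := volume.restrict (Icc (1:ℝ) 2))
    (p := ENNReal.ofReal q) (ENNReal.ofReal_pos.2 (by linarith)).ne'
    ((ae_restrict_iff' measurableSet_Icc).2 (ae_of_all _ hPop))
  rw [eLpNorm_indicator_parabolaBox hδ.le (by norm_num) (by linarith),
    ENNReal.le_div_iff_mul_le (Or.inl (ENNReal.ofReal_pos.2 (by positivity)).ne')
      (Or.inl ENNReal.ofReal_ne_top),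
    ← ENNReal.ofReal_mul (by positivity)]
  refine le_trans (ENNReal.ofReal_le_ofReal ?_) hnum
  linarith [rpow_sub_mul_rpow_le hδ (by norm_num : (1:ℝ) ≤ 4) hp]
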